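/- arXiv:1211.2308 — 2 statements merged into one kernel-verified Lean document; each statement's English description precedes it below -/
import Mathlib

section
/- Let K be a field of characteristic zero and R = K[[x, y₁,...,y_{n-1}]]. Let X = ∂/∂x and let I be an ideal of R with X(I) ⊆ I and I closed in the coefficient-wise topology. Then I is generated by I ∩ K[[y₁,...,y_{n-1}]]; that is, there exist generators of I that do not depend on the variable x. -/
/-!
For `f ∈ I` the operators `f ↦ f - j⁻¹ X f'` preserve `I` and multiply the coefficient of `Xⁱ` by
`1 - i / j`; composing them for `j = 1, …, N` leaves an element of `I` agreeing with the constant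
`f(0)` up to degree `N`, so closedness puts `C (f(0))` in `I`. Applied to the derivatives of `f`,
this puts every `C (coeff i f)` in `I`. As `K[[y]]` is Noetherian, these coefficients are
combinations of finitely many `a₁, …, a_r ∈ I ∩ K[[y]]`, and collecting the combination
coefficients degree by degree writes `f = ∑ₖ gₖ aₖ`.
-/

open PowerSeries

theorem isUnit_natCast_of_ne_zero {S : Type*} [Semiring S] [Algebra ℚ S] {n : ℕ} (hn : n ≠ 0) :
    IsUnit (n : S) := by
  simpa using (IsUnit.mk0 (n : ℚ) (Nat.cast_ne_zero.2 hn)).map (algebraMap ℚ S)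

namespace PowerSeries

variable {S : Type*}

theorem coeff_X_mul_derivative [CommSemiring S] (f : S⟦X⟧) (i : ℕ) :
    coeff i (X * d⁄dX S f) = i * coeff i f := by
  cases i with
  | zero => simp
  | succ i => rw [coeff_succ_X_mul, coeff_derivative, mul_comm]; push_cast; rfl

theorem mem_map_C_of_forall_coeff_mem [CommSemiring S] {J : Ideal S} (hJ : J.FG) {f : S⟦X⟧}
    (hf : ∀ i, coeff i f ∈ J) : f ∈ J.map (C (R := S)) := by
  obtain ⟨s, rfl⟩ := hJ
  choose c _ hc using fun i => Submodule.mem_span_finset.1 (hf i)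
  have hsum : f = ∑ a ∈ s, mk (fun i => c i a) * C a := by
    ext i
    simp [map_sum, coeff_mul_C, ← hc i, smul_eq_mul]
  rw [hsum]
  exact Ideal.sum_mem _ fun a ha =>
    Ideal.mul_mem_left _ _ (Ideal.mem_map_of_mem _ (Ideal.subset_span ha))

section DerivativeStable

variable [CommRing S] {I : Ideal S⟦X⟧}

theorem iterate_derivative_mem (hX : ∀ f ∈ I, d⁄dX S f ∈ I) {f : S⟦X⟧} (hf : f ∈ I) (k : ℕ) :
    (d⁄dX S)^[k] f ∈ I := by
  induction k with
  | zero => exact hf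
  | succ k ih => rw [Function.iterate_succ_apply']; exact hX _ ih

variable [Algebra ℚ S]

theorem exists_mem_coeff_zero_eq_and_coeff_eq_zero (hX : ∀ f ∈ I, d⁄dX S f ∈ I) {f : S⟦X⟧}
    (hf : f ∈ I) (N : ℕ) :
    ∃ h ∈ I, coeff 0 h = coeff 0 f ∧ ∀ i, 1 ≤ i → i ≤ N → coeff i h = 0 := by
  induction N with
  | zero => exact ⟨f, hf, rfl, fun i h1 h2 => by omega⟩
  | succ N ih =>
    obtain ⟨h, hI, h0, hzero⟩ := ih
    obtain ⟨u, hu⟩ := isUnit_natCast_of_ne_zero (S := S) N.succ_ne_zero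
    have hcoeff (i : ℕ) : coeff i (h - C (↑u⁻¹ : S) * (X * d⁄dX S h)) =
        coeff i h - ↑u⁻¹ * (i * coeff i h) := by
      rw [map_sub, coeff_C_mul, coeff_X_mul_derivative]
    refine ⟨h - C (↑u⁻¹ : S) * (X * d⁄dX S h),
      I.sub_mem hI (I.mul_mem_left _ (I.mul_mem_left _ (hX h hI))), ?_, ?_⟩
    · simp [hcoeff, h0]
    · intro i h1 h2
      rcases Nat.lt_or_eq_of_le h2 with h2 | rfl
      · simp [hcoeff, hzero i h1 (by omega)]
      · rw [hcoeff, ← hu, Units.inv_mul_cancel_left, sub_self]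

theorem C_constantCoeff_mem (hX : ∀ f ∈ I, d⁄dX S f ∈ I)
    (hclosed : ∀ g : S⟦X⟧, (∀ N : ℕ, ∃ h ∈ I, ∀ i ≤ N, coeff i h = coeff i g) → g ∈ I)
    {f : S⟦X⟧} (hf : f ∈ I) : C (constantCoeff f) ∈ I := by
  refine hclosed _ fun N => ?_
  obtain ⟨h, hI, h0, hzero⟩ := exists_mem_coeff_zero_eq_and_coeff_eq_zero hX hf N
  refine ⟨h, hI, fun i hi => ?_⟩
  rcases Nat.eq_zero_or_pos i with rfl | hpos
  · simp [h0]
  · rw [hzero i hpos hi, coeff_C, if_neg hpos.ne']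

theorem C_coeff_mem (hX : ∀ f ∈ I, d⁄dX S f ∈ I)
    (hclosed : ∀ g : S⟦X⟧, (∀ N : ℕ, ∃ h ∈ I, ∀ i ≤ N, coeff i h = coeff i g) → g ∈ I)
    {f : S⟦X⟧} (hf : f ∈ I) (i : ℕ) : C (coeff i f) ∈ I := by
  have h := C_constantCoeff_mem hX hclosed (iterate_derivative_mem hX hf i)
  rwa [constantCoeff_iterate_derivative, map_mul,
    Ideal.unit_mul_mem_iff_mem _ ((isUnit_natCast_of_ne_zero i.factorial_ne_zero).map C)] at h

end DerivativeStable

end PowerSeries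

/-- in `R = K[[x, y₁, …, y_{n-1}]]` (power series in `x` over
`S = K[[y₁, …, y_{n-1}]]`), an ideal `I` invariant under `∂/∂x` and closed for
coefficient-wise convergence is generated by its elements not involving `x`, i.e.
by `I ∩ K[[y]]` where `K[[y]] = range (C)`. -/
theorem invariant_closed_ideal_generated_by_x_free_elements
    {K : Type*} [Field K] [CharZero K] (n : ℕ)
    (I : Ideal (PowerSeries (MvPowerSeries (Fin (n - 1)) K)))
    (hX : ∀ f ∈ I, PowerSeries.derivative (MvPowerSeries (Fin (n - 1)) K) f ∈ I)
    (hclosed : ∀ g : PowerSeries (MvPowerSeries (Fin (n - 1)) K),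
      (∀ N : ℕ, ∃ h ∈ I, ∀ i ≤ N,
        PowerSeries.coeff (R := MvPowerSeries (Fin (n - 1)) K) i h =
        PowerSeries.coeff (R := MvPowerSeries (Fin (n - 1)) K) i g) → g ∈ I) :
    I = Ideal.span
      ((I : Set (PowerSeries (MvPowerSeries (Fin (n - 1)) K))) ∩
        Set.range (PowerSeries.C (R := MvPowerSeries (Fin (n - 1)) K))) := by
  refine le_antisymm (fun f hf => ?_) (Ideal.span_le.2 Set.inter_subset_left)
  have hJ : (I.comap (C (R := MvPowerSeries (Fin (n - 1)) K))).FG := IsNoetherian.noetherian _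
  have hmap := mem_map_C_of_forall_coeff_mem hJ fun i => C_coeff_mem hX hclosed hf i
  rwa [Ideal.map, Ideal.coe_comap, Set.image_preimage_eq_inter_range] at hmap
end

section
/- Let R be a commutative ring, D a derivation of R, t ∈ R with D(t) ∈ (t) (t generates a D-invariant principal ideal), and J an ideal of R. Then D(tⁿJ) + tⁿJ = tⁿ(D(J) + J) as ideals, where D(I) denotes the ideal generated by {D(f) : f ∈ I}. In particular the 'controlled transform' commutes with the derivative closure operation: multiplying by an invariant principal ideal commutes with forming I + D[I]. -/
/-- The ideal generated by the image of an ideal under a derivation. -/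
def derIdeal {R : Type*} [CommRing R] (D : Derivation ℤ R R) (I : Ideal R) : Ideal R :=
  Ideal.span {y | ∃ f ∈ I, y = D f}

/-!
If `D s = s * c`, the Leibniz rule gives `D (s * j) = s * (D j + c * j)` and
`s * D j = D (s * j) - s * (c * j)`, which yield the two inclusions; `s = tⁿ` qualifies because
`D a ∈ (a)` and `D b ∈ (b)` imply `D (a * b) ∈ (a * b)`.
-/

namespace Derivation

variable {A R : Type*} [CommSemiring A] [CommSemiring R] [Algebra A R] (D : Derivation A R R)

theorem mul_mem_span_singleton_mul {a b : R} (ha : D a ∈ Ideal.span {a})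
    (hb : D b ∈ Ideal.span {b}) : D (a * b) ∈ Ideal.span {a * b} := by
  obtain ⟨c, hc⟩ := Ideal.mem_span_singleton'.mp ha
  obtain ⟨d, hd⟩ := Ideal.mem_span_singleton'.mp hb
  refine Ideal.mem_span_singleton'.mpr ⟨c + d, ?_⟩
  rw [leibniz, ← hc, ← hd, smul_eq_mul, smul_eq_mul]
  ring

theorem pow_mem_span_singleton_pow {a : R} (ha : D a ∈ Ideal.span {a}) (n : ℕ) :
    D (a ^ n) ∈ Ideal.span {a ^ n} := by
  induction n with
  | zero => simp
  | succ n ih => simpa only [pow_succ] using D.mul_mem_span_singleton_mul ih ha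

end Derivation

section derIdeal

variable {R : Type*} [CommRing R] (D : Derivation ℤ R R)

theorem derIdeal_le_iff {I K : Ideal R} : derIdeal D I ≤ K ↔ ∀ f ∈ I, D f ∈ K := by
  simp only [derIdeal, Ideal.span_le, Set.subset_def, Set.mem_ofPred_eq, SetLike.mem_coe]
  exact ⟨fun h f hf => h _ ⟨f, hf, rfl⟩, fun h _ ⟨f, hf, hy⟩ => hy ▸ h f hf⟩

theorem derIdeal_span_singleton_mul_le {s : R} (hs : D s ∈ Ideal.span {s}) (J : Ideal R) :
    derIdeal D (Ideal.span {s} * J) ≤ Ideal.span {s} * (derIdeal D J + J) := by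
  obtain ⟨c, hc⟩ := Ideal.mem_span_singleton'.mp hs
  refine (derIdeal_le_iff D).mpr fun f hf => ?_
  obtain ⟨j, hj, rfl⟩ := Ideal.mem_span_singleton_mul.mp hf
  have hDsj : D (s * j) = s * (D j + c * j) := by
    rw [Derivation.leibniz, ← hc, smul_eq_mul, smul_eq_mul]
    ring
  rw [hDsj]
  refine Ideal.mem_span_singleton_mul.mpr ⟨_, add_mem (Ideal.mem_sup_left ?_) ?_, rfl⟩
  · exact Ideal.subset_span ⟨j, hj, rfl⟩
  · exact Ideal.mem_sup_right (J.mul_mem_left c hj)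

theorem span_singleton_mul_derIdeal_le {s : R} (hs : D s ∈ Ideal.span {s}) (J : Ideal R) :
    Ideal.span {s} * derIdeal D J ≤ derIdeal D (Ideal.span {s} * J) + Ideal.span {s} * J := by
  obtain ⟨c, hc⟩ := Ideal.mem_span_singleton'.mp hs
  have hsJ {j : R} (hj : j ∈ J) : s * j ∈ Ideal.span {s} * J :=
    Ideal.mem_span_singleton_mul.mpr ⟨j, hj, rfl⟩
  refine Ideal.span_singleton_mul_le_iff.mpr fun z hz => ?_
  suffices derIdeal D J ≤ (derIdeal D (Ideal.span {s} * J) + Ideal.span {s} * J).colon {s} by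
    simpa only [Submodule.mem_colon_singleton, smul_eq_mul, mul_comm z s] using this hz
  refine (derIdeal_le_iff D).mpr fun j hj => Submodule.mem_colon_singleton.mpr ?_
  have hDj_s : D j • s = D (s * j) - s * (c * j) := by
    rw [Derivation.leibniz, ← hc, smul_eq_mul, smul_eq_mul, smul_eq_mul]
    ring
  rw [hDj_s]
  refine sub_mem (Ideal.mem_sup_left ?_) (Ideal.mem_sup_right (hsJ (J.mul_mem_left c hj)))
  exact Ideal.subset_span ⟨s * j, hsJ hj, rfl⟩

theorem derIdeal_span_singleton_mul_sup {s : R} (hs : D s ∈ Ideal.span {s}) (J : Ideal R) :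
    derIdeal D (Ideal.span {s} * J) + Ideal.span {s} * J =
      Ideal.span {s} * (derIdeal D J + J) := by
  refine le_antisymm (sup_le (derIdeal_span_singleton_mul_le D hs J)
    (Ideal.mul_mono_right le_sup_right)) ?_
  rw [mul_add]
  exact sup_le (span_singleton_mul_derIdeal_le D hs J) le_sup_right

end derIdeal

/-- if `D t ∈ (t)`, then `D(tⁿJ) + tⁿJ = tⁿ·(D(J) + J)`: the controlled
transform by an invariant principal ideal commutes with the derivative closure. -/
theorem controlled_transform_derivative_closure
    {R : Type*} [CommRing R] (D : Derivation ℤ R R) (t : R)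
    (ht : D t ∈ Ideal.span {t}) (J : Ideal R) (n : ℕ) :
    derIdeal D (Ideal.span {t ^ n} * J) + Ideal.span {t ^ n} * J =
      Ideal.span {t ^ n} * (derIdeal D J + J) :=
  derIdeal_span_singleton_mul_sup D (D.pow_mem_span_singleton_pow ht n) J
end
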